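/- arXiv:1906.12312 — 2 statements merged into one kernel-verified Lean document; each statement's English description precedes it below -/
import Mathlib

section
/- Let q : ℤⁿ → ℤ be an integral quadratic form, q(x) = Σ_{i ≤ j} q_{ij} x_i x_j with all q_{ij} ∈ ℤ, and let q_ℝ : ℝⁿ → ℝ be the same polynomial considered over the reals. Then q_ℝ(x) > 0 for every nonzero x ∈ ℝⁿ if and only if q(x) > 0 for every nonzero x ∈ ℤⁿ. -/
/-!
Positivity over `ℤⁿ` passes to `ℚⁿ` by clearing denominators, hence to nonnegativity on `ℝⁿ`
by density. If the real form then vanished at some `x ≠ 0`, `x` would lie in the kernel of the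
positive semidefinite polar matrix. That matrix has rational entries, so its determinant is
rational and zero, and it has a nonzero rational kernel vector `v` as well, with `q(v) = 0`.
-/

open Matrix

section UpperQuadForm

variable {ι R : Type*} [LinearOrder ι] [CommRing R]

def upperMatrix (c : ι → ι → R) : Matrix ι ι R :=
  Matrix.of fun i j => if i ≤ j then c i j else 0

def polarMatrix (c : ι → ι → R) : Matrix ι ι R :=
  upperMatrix c + (upperMatrix c)ᵀ

lemma polarMatrix_map {S : Type*} [CommRing S] (f : R →+* S) (c : ι → ι → R) :
    (polarMatrix c).map f = polarMatrix fun i j => f (c i j) := by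
  ext i j
  simp [polarMatrix, upperMatrix, apply_ite f]

variable [Fintype ι]

def upperQuadForm (c : ι → ι → R) (x : ι → R) : R :=
  ∑ i, ∑ j, if i ≤ j then c i j * x i * x j else 0

lemma upperQuadForm_eq_dotProduct (c : ι → ι → R) (x : ι → R) :
    upperQuadForm c x = x ⬝ᵥ upperMatrix c *ᵥ x := by
  simp only [upperQuadForm, upperMatrix, dotProduct, mulVec, Finset.mul_sum, of_apply]
  refine Finset.sum_congr rfl fun i _ => Finset.sum_congr rfl fun j _ => ?_
  split_ifs <;> ring

lemma dotProduct_polarMatrix_mulVec (c : ι → ι → R) (x : ι → R) :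
    x ⬝ᵥ polarMatrix c *ᵥ x = 2 * upperQuadForm c x := by
  rw [polarMatrix, add_mulVec, dotProduct_add, dotProduct_mulVec x (upperMatrix c)ᵀ,
    vecMul_transpose, dotProduct_comm (upperMatrix c *ᵥ x), upperQuadForm_eq_dotProduct]
  ring

lemma map_upperQuadForm {S : Type*} [CommRing S] (f : R →+* S) (c : ι → ι → R) (x : ι → R) :
    f (upperQuadForm c x) = upperQuadForm (fun i j => f (c i j)) (fun i => f (x i)) := by
  simp [upperQuadForm, map_sum, apply_ite f]

lemma Int.cast_upperQuadForm {S : Type*} [CommRing S] (c : ι → ι → ℤ) (x : ι → ℤ) :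
    ((upperQuadForm c x : ℤ) : S) =
      upperQuadForm (fun i j => (c i j : S)) (fun i => (x i : S)) := by
  simpa using map_upperQuadForm (Int.castRingHom S) c x

lemma Rat.cast_upperQuadForm {S : Type*} [Field S] [CharZero S] (c : ι → ι → ℚ) (x : ι → ℚ) :
    ((upperQuadForm c x : ℚ) : S) =
      upperQuadForm (fun i j => (c i j : S)) (fun i => (x i : S)) := by
  simpa using map_upperQuadForm (Rat.castHom S) c x

lemma upperQuadForm_smul (c : ι → ι → R) (d : R) (x : ι → R) :
    upperQuadForm c (d • x) = d ^ 2 * upperQuadForm c x := by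
  simp only [upperQuadForm, Finset.mul_sum, Pi.smul_apply, smul_eq_mul]
  refine Finset.sum_congr rfl fun i _ => Finset.sum_congr rfl fun j _ => ?_
  split_ifs <;> ring

lemma continuous_upperQuadForm (c : ι → ι → ℝ) : Continuous (upperQuadForm c) := by
  refine continuous_finsetSum _ fun i _ => continuous_finsetSum _ fun j _ => ?_
  split_ifs <;> fun_prop

end UpperQuadForm

lemma Matrix.exists_mulVec_eq_zero_of_map {ι K L : Type*} [Fintype ι] [DecidableEq ι] [Field K]
    [Field L] (f : K →+* L) {M : Matrix ι ι K} (h : ∃ x ≠ 0, M.map f *ᵥ x = 0) :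
    ∃ v ≠ 0, M *ᵥ v = 0 := by
  rw [exists_mulVec_eq_zero_iff] at h ⊢
  rwa [← RingHom.mapMatrix_apply, ← RingHom.map_det, map_eq_zero] at h

lemma nonneg_of_forall_rat_nonneg {ι : Type*} [Finite ι] {f : (ι → ℝ) → ℝ} (hf : Continuous f)
    (h : ∀ v : ι → ℚ, 0 ≤ f fun i => (v i : ℝ)) (x : ι → ℝ) : 0 ≤ f x :=
  (DenseRange.piMap fun _ => Rat.denseRange_cast).induction_on x
    (isClosed_le continuous_const hf) h

section Positivity

variable {ι : Type*} [Fintype ι] [LinearOrder ι]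

lemma upperQuadForm_rat_pos_of_int_pos {q : ι → ι → ℤ}
    (hq : ∀ w : ι → ℤ, w ≠ 0 → 0 < upperQuadForm q w) {v : ι → ℚ} (hv : v ≠ 0) :
    0 < upperQuadForm (fun i j => (q i j : ℚ)) v := by
  obtain ⟨⟨d, hd⟩, hdv⟩ := IsLocalization.exist_integer_multiples_of_finite (nonZeroDivisors ℤ) v
  choose w hw using hdv
  have hd0 : d ≠ 0 := nonZeroDivisors.ne_zero hd
  have hwv : (fun i => (w i : ℚ)) = (d : ℚ) • v := funext hw
  have hw0 : w ≠ 0 := by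
    rintro rfl
    exact hv (funext fun i => by simpa [hd0] using (hw i).symm)
  have hscaled : 0 < (d : ℚ) ^ 2 * upperQuadForm (fun i j => (q i j : ℚ)) v := by
    rw [← upperQuadForm_smul, ← hwv, ← Int.cast_upperQuadForm]
    exact_mod_cast hq w hw0
  exact pos_of_mul_pos_right hscaled (sq_nonneg _)

lemma polarMatrix_mulVec_eq_zero {c : ι → ι → ℝ} (hc : ∀ x, 0 ≤ upperQuadForm c x) {x : ι → ℝ}
    (hx : upperQuadForm c x = 0) : polarMatrix c *ᵥ x = 0 := by
  have hpsd : (polarMatrix c).PosSemidef := by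
    refine .of_dotProduct_mulVec_nonneg ?_ fun y => ?_
    · exact isHermitian_iff_isSymm.mpr (isSymm_add_transpose_self _)
    · rw [star_trivial, dotProduct_polarMatrix_mulVec]
      exact mul_nonneg zero_le_two (hc y)
  rw [← hpsd.dotProduct_mulVec_zero_iff, star_trivial, dotProduct_polarMatrix_mulVec, hx, mul_zero]

lemma exists_rat_isotropic_of_real_isotropic [DecidableEq ι] {c : ι → ι → ℚ}
    (hc : ∀ x : ι → ℝ, 0 ≤ upperQuadForm (fun i j => (c i j : ℝ)) x) {x : ι → ℝ} (hx : x ≠ 0)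
    (hcx : upperQuadForm (fun i j => (c i j : ℝ)) x = 0) :
    ∃ v : ι → ℚ, v ≠ 0 ∧ upperQuadForm c v = 0 := by
  obtain ⟨v, hv, hcv⟩ := (polarMatrix c).exists_mulVec_eq_zero_of_map (Rat.castHom ℝ)
    ⟨x, hx, by rw [polarMatrix_map]; exact polarMatrix_mulVec_eq_zero hc hcx⟩
  refine ⟨v, hv, ?_⟩
  have hpolar := dotProduct_polarMatrix_mulVec c v
  rw [hcv, dotProduct_zero] at hpolar
  linarith

lemma upperQuadForm_real_pos_of_rat_pos {c : ι → ι → ℚ}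
    (hc : ∀ v : ι → ℚ, v ≠ 0 → 0 < upperQuadForm c v) {x : ι → ℝ} (hx : x ≠ 0) :
    0 < upperQuadForm (fun i j => (c i j : ℝ)) x := by
  classical
  have hnonneg : ∀ y : ι → ℝ, 0 ≤ upperQuadForm (fun i j => (c i j : ℝ)) y :=
    nonneg_of_forall_rat_nonneg (continuous_upperQuadForm _) fun v => by
      rw [← Rat.cast_upperQuadForm]
      rcases eq_or_ne v 0 with rfl | hv
      · simp [upperQuadForm]
      · exact_mod_cast (hc v hv).le
  refine (hnonneg x).lt_of_ne' fun hx0 => ?_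
  obtain ⟨v, hv, hv0⟩ := exists_rat_isotropic_of_real_isotropic hnonneg hx hx0
  exact (hc v hv).ne' hv0

end Positivity

/-- For an integral quadratic form `q(x) = ∑_{i ≤ j} q_{ij} x_i x_j`, positivity of
the corresponding real form on all nonzero real vectors is equivalent to
positivity of `q` on all nonzero integer vectors. -/
theorem integral_quadratic_form_posDef_iff (n : ℕ) (q : Fin n → Fin n → ℤ) :
    (∀ x : Fin n → ℝ, x ≠ 0 →
        0 < ∑ i, ∑ j, if i ≤ j then (q i j : ℝ) * x i * x j else 0) ↔
      (∀ v : Fin n → ℤ, v ≠ 0 →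
        0 < ∑ i, ∑ j, if i ≤ j then q i j * v i * v j else 0) := by
  change (∀ x : Fin n → ℝ, x ≠ 0 → 0 < upperQuadForm (fun i j => (q i j : ℝ)) x) ↔
    ∀ v : Fin n → ℤ, v ≠ 0 → 0 < upperQuadForm q v
  constructor
  · intro hR v hv
    have hpos := hR (fun i => (v i : ℝ)) fun h => hv (funext fun i => by simpa using congrFun h i)
    rw [← Int.cast_upperQuadForm] at hpos
    exact_mod_cast hpos
  · intro hZ x hx
    have hcast : (fun i j => (q i j : ℝ)) = fun i j => ((q i j : ℚ) : ℝ) := by simp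
    rw [hcast]
    exact upperQuadForm_real_pos_of_rat_pos (fun v => upperQuadForm_rat_pos_of_int_pos hZ) hx
end

section
/- Let n ≥ 2 and let A ∈ M_n(ℤ) be the upper-triangular matrix with entries a_{i,i+s} = 1 if s is even, a_{i,i+s} = −1 if s is odd (for 0 ≤ s ≤ n − i), and a_{ij} = 0 for i > j. Then A is positive definite, i.e., xᵀ·A·x > 0 for all nonzero x ∈ ℝⁿ. -/
/-!
The symmetric part of the Nakayama matrix is a rank-one perturbation of the identity:
`A + Aᵀ = 1 + v vᵀ` with `v i = (-1)^i`, because `(-1)^(j-i) = (-1)^i (-1)^j`. Hence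
`2 xᵀ A x = ‖x‖² + (v ⬝ x)² > 0` for `x ≠ 0`.
-/

open Matrix

/-- The Nakayama matrix `A^(n)`: upper triangular with `a_{ij} = (-1)^(j-i)` for
`i ≤ j` and `0` below the diagonal. -/
def nakayama (n : ℕ) : Matrix (Fin n) (Fin n) ℝ :=
  Matrix.of fun i j =>
    if (i : ℕ) ≤ (j : ℕ) then (-1 : ℝ) ^ ((j : ℕ) - (i : ℕ)) else 0

namespace Matrix

variable {ι R : Type*} [Fintype ι]

theorem dotProduct_add_transpose_mulVec [CommSemiring R] (A : Matrix ι ι R) (x : ι → R) :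
    x ⬝ᵥ (A + Aᵀ) *ᵥ x = 2 * (x ⬝ᵥ A *ᵥ x) := by
  rw [add_mulVec, dotProduct_add, mulVec_transpose, dotProduct_comm x (x ᵥ* A),
    ← dotProduct_mulVec, two_mul]

theorem dotProduct_vecMulVec_self_mulVec [CommSemiring R] (v x : ι → R) :
    x ⬝ᵥ vecMulVec v v *ᵥ x = (v ⬝ᵥ x) ^ 2 := by
  rw [vecMulVec_mulVec, op_smul_eq_smul, dotProduct_smul, smul_eq_mul,
    dotProduct_comm, sq]

theorem dotProduct_self_pos [Ring R] [LinearOrder R] [IsStrictOrderedRing R] {x : ι → R}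
    (hx : x ≠ 0) : 0 < x ⬝ᵥ x :=
  lt_of_le_of_ne (Finset.sum_nonneg fun i _ => mul_self_nonneg (x i))
    (Ne.symm (mt dotProduct_self_eq_zero.mp hx))

theorem dotProduct_mulVec_pos_of_add_transpose_eq [Field R] [LinearOrder R]
    [IsStrictOrderedRing R] [DecidableEq ι] {A : Matrix ι ι R} {v : ι → R}
    (hA : A + Aᵀ = 1 + vecMulVec v v) {x : ι → R} (hx : x ≠ 0) : 0 < x ⬝ᵥ A *ᵥ x := by
  have h := dotProduct_add_transpose_mulVec A x
  rw [hA, add_mulVec, one_mulVec, dotProduct_add, dotProduct_vecMulVec_self_mulVec] at h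
  nlinarith [dotProduct_self_pos hx, sq_nonneg (v ⬝ᵥ x)]

end Matrix

theorem neg_one_pow_sub_eq_mul {R : Type*} [Monoid R] [HasDistribNeg R] {i j : ℕ}
    (hij : i ≤ j) : (-1 : R) ^ (j - i) = (-1) ^ i * (-1) ^ j := by
  obtain ⟨k, rfl⟩ := Nat.exists_eq_add_of_le hij
  rw [Nat.add_sub_cancel_left, pow_add, ← mul_assoc, ← pow_add, ← two_mul, pow_mul, neg_one_sq,
    one_pow, one_mul]

def alternatingSigns (n : ℕ) : Fin n → ℝ := fun i => (-1) ^ (i : ℕ)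

theorem nakayama_add_transpose (n : ℕ) :
    nakayama n + (nakayama n)ᵀ = 1 + vecMulVec (alternatingSigns n) (alternatingSigns n) := by
  ext i j
  simp only [Matrix.add_apply, transpose_apply, nakayama, of_apply, one_apply, vecMulVec_apply,
    alternatingSigns]
  rcases lt_trichotomy i j with hij | rfl | hji
  · have hij' : (i : ℕ) < j := hij
    rw [if_pos hij'.le, if_neg (not_le.mpr hij'), if_neg hij.ne, neg_one_pow_sub_eq_mul hij'.le]
    ring
  · rw [if_pos le_rfl, if_pos rfl, Nat.sub_self, pow_zero, ← mul_pow]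
    norm_num
  · have hji' : (j : ℕ) < i := hji
    rw [if_neg (not_le.mpr hji'), if_pos hji'.le, if_neg hji.ne', neg_one_pow_sub_eq_mul hji'.le]
    ring

theorem nakayama_posDef_general (n : ℕ) :
    ∀ x : Fin n → ℝ, x ≠ 0 → 0 < x ⬝ᵥ (nakayama n).mulVec x :=
  fun _ hx => dotProduct_mulVec_pos_of_add_transpose_eq (nakayama_add_transpose n) hx

/-- The Nakayama matrix is positive definite: `xᵀ·A·x > 0` for all nonzero `x`. -/
theorem nakayama_posDef (n : ℕ) (hn : 2 ≤ n) :
    ∀ x : Fin n → ℝ, x ≠ 0 → 0 < x ⬝ᵥ (nakayama n).mulVec x :=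
  nakayama_posDef_general n
end
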